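/- Σ_{t≥0} C_{2t}(q) = ∏_{k≥1} (1−q^{4k})(1−q^{6k})² · ((1−q^k)(1−q^{3k})(1−q^{12k}))^{−1} in ℚ⟦q⟧. -/

import Mathlib

open PowerSeries Finset

noncomputable section

/-- The operator `D = q·d/dq` on `ℚ⟦q⟧`, coefficientwise `aₙ ↦ n·aₙ`. -/
def Dq (F : ℚ⟦X⟧) : ℚ⟦X⟧ := PowerSeries.mk fun n => (n : ℚ) * coeff (R := ℚ) n F

/-- `E₂(q) = 1 - 24 Σ_{n≥1} σ₁(n) qⁿ`. -/
def E2 : ℚ⟦X⟧ := PowerSeries.mk fun n => if n = 0 then 1 else -24 * ∑ d ∈ n.divisors, (d : ℚ)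

/-- `E₄(q) = 1 + 240 Σ_{n≥1} σ₃(n) qⁿ`. -/
def E4 : ℚ⟦X⟧ := PowerSeries.mk fun n => if n = 0 then 1 else 240 * ∑ d ∈ n.divisors, (d : ℚ) ^ 3

/-- `E₆(q) = 1 - 504 Σ_{n≥1} σ₅(n) qⁿ`. -/
def E6 : ℚ⟦X⟧ := PowerSeries.mk fun n => if n = 0 then 1 else -504 * ∑ d ∈ n.divisors, (d : ℚ) ^ 5

/-- `∏_{k≥1} (1 - qᵏ)`, defined coefficientwise by truncated finite products
(factors with `k > N` do not affect the `N`-th coefficient). -/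
def eulerProd : ℚ⟦X⟧ :=
  PowerSeries.mk fun N => coeff (R := ℚ) N (∏ k ∈ Finset.Icc 1 N, (1 - X ^ k : ℚ⟦X⟧))

/-- `Σ_{n ∈ ℤ} (-1)ⁿ (6n+1)^{2t} q^{n(3n+1)/2}` (any `n` with `n(3n+1)/2 = N`
satisfies `|n| ≤ N`). -/
def pentagonalSum (t : ℕ) : ℚ⟦X⟧ := PowerSeries.mk fun N =>
  ∑ n ∈ Finset.Icc (-(N : ℤ)) (N : ℤ),
    if n * (3 * n + 1) = 2 * N then (-1 : ℚ) ^ n * ((6 * n + 1 : ℤ) : ℚ) ^ (2 * t) else 0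

/-- `θ₂(q)⁴ = 16 q (Σ_{n≥0} q^{n(n+1)})⁴`. -/
def theta2four : ℚ⟦X⟧ :=
  16 * X * (PowerSeries.mk fun N => ∑ n ∈ Finset.range (N + 1),
    if n * (n + 1) = N then (1 : ℚ) else 0) ^ 4

/-- `θ₃(q) = 1 + 2 Σ_{n≥1} q^{n²}`. -/
def theta3 : ℚ⟦X⟧ :=
  1 + 2 * PowerSeries.mk fun N => ∑ n ∈ Finset.Icc 1 N, if n ^ 2 = N then (1 : ℚ) else 0

/-- `θ₄(q) = 1 + 2 Σ_{n≥1} (-1)ⁿ q^{n²}`. -/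
def theta4 : ℚ⟦X⟧ :=
  1 + 2 * PowerSeries.mk fun N => ∑ n ∈ Finset.Icc 1 N, if n ^ 2 = N then (-1 : ℚ) ^ n else 0

/-- `Θ_{r,s} = θ₂^{4r} θ₃^{4s} + θ₂^{4s} θ₃^{4r}`. -/
def Theta (r s : ℕ) : ℚ⟦X⟧ :=
  theta2four ^ r * theta3 ^ (4 * s) + theta2four ^ s * theta3 ^ (4 * r)

/-- MacMahon's `C_{2t}(q) = Σ_{0<s₁<⋯<s_t} q^{Σ(2sᵢ-1)} ∏ (1-q^{2sᵢ-1})⁻²`,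
defined coefficientwise: tuples with some `sᵢ > N+1` do not affect the `N`-th coefficient. -/
def Cmac (t : ℕ) : ℚ⟦X⟧ := PowerSeries.mk fun N =>
  coeff (R := ℚ) N (∑ S ∈ (Finset.Icc 1 (N + 1)).powersetCard t,
    ∏ s ∈ S, (X ^ (2 * s - 1) * ((1 - X ^ (2 * s - 1) : ℚ⟦X⟧)⁻¹) ^ 2))

/-- MacMahon's `U_{2t}(q) = Σ_{0<k₁<⋯<k_t} q^{Σkᵢ} ∏ (1-q^{kᵢ})⁻²`,
defined coefficientwise by truncation. -/
def Umac (t : ℕ) : ℚ⟦X⟧ := PowerSeries.mk fun N =>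
  coeff (R := ℚ) N (∑ S ∈ (Finset.Icc 1 (N + 1)).powersetCard t,
    ∏ k ∈ S, (X ^ k * ((1 - X ^ k : ℚ⟦X⟧)⁻¹) ^ 2))

/-- `U*_{2t}(q) = Σ_{0<k₁≤⋯≤k_t} q^{Σkᵢ} ∏ (1-q^{kᵢ})⁻²`, a sum over multisets of
size `t`, defined coefficientwise by truncation. -/
def UmacStar (t : ℕ) : ℚ⟦X⟧ := PowerSeries.mk fun N =>
  coeff (R := ℚ) N (∑ m ∈ (Finset.Icc 1 (N + 1)).sym t,
    ((m : Multiset ℕ).map fun k => X ^ k * ((1 - X ^ k : ℚ⟦X⟧)⁻¹) ^ 2).prod)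

/-- `E₂(q²)`, the substitution `q ↦ q²` in `E₂`. -/
def E2sq : ℚ⟦X⟧ := PowerSeries.mk fun n => if 2 ∣ n then coeff (R := ℚ) (n / 2) E2 else 0

/-- `G₂(q) = 2 E₂(q²) - E₂(q)`. -/
def G2 : ℚ⟦X⟧ := 2 * E2sq - E2

/-- `Σ_{t≥0} C_{2t}(q)`, well defined since `C_{2t}` has order `≥ t² ≥ t`. -/
def sumC : ℚ⟦X⟧ := PowerSeries.mk fun N => ∑ t ∈ Finset.range (N + 1), coeff (R := ℚ) N (Cmac t)

/-!
Expanding `∏ₛ (1 + q^{2s-1}/(1 - q^{2s-1})²)` over subsets gives `Σ_t C_{2t}`, and for `j = 2s - 1`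
the factor equals `(1 - q^{6j}) / ((1 - q^j)(1 - q^{2j})(1 - q^{3j}))`. With `P(a) = ∏_k (1 - q^{ak})`
the product of `1 - q^{aj}` over odd `j` is `P(a)/P(2a)`, so the product is
`(P(6)/P(12)) / ((P(1)/P(2)) (P(2)/P(4)) (P(3)/P(6))) = P(4) P(6)² / (P(1) P(3) P(12))`.
Everything is done with finite truncations, which agree modulo `q^{N+1}`, where every `P(a)` is a unit.
-/

namespace PowerSeries

section Truncation

variable {R : Type*} [CommRing R]

variable (R) in
abbrev modXPow (N : ℕ) :
    R⟦X⟧ →+* R⟦X⟧ ⧸ Ideal.span {(X : R⟦X⟧) ^ (N + 1)} :=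
  Ideal.Quotient.mk _

theorem coeff_eq_of_modXPow_eq {N : ℕ} {A B : R⟦X⟧} (h : modXPow R N A = modXPow R N B) :
    coeff N A = coeff N B := by
  have hdvd : (X : R⟦X⟧) ^ (N + 1) ∣ A - B :=
    Ideal.mem_span_singleton.mp (Ideal.Quotient.eq.mp h)
  simpa [sub_eq_zero] using X_pow_dvd_iff.mp hdvd N N.lt_succ_self

theorem modXPow_pow_eq_zero_of_lt {N m : ℕ} {y : R⟦X⟧} (hy : X ∣ y) (hm : N < m) :
    modXPow R N (y ^ m) = 0 :=
  Ideal.Quotient.eq_zero_iff_mem.mpr <| Ideal.mem_span_singleton.mpr <|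
    (pow_dvd_pow X hm).trans (pow_dvd_pow_of_dvd hy m)

def eulerTrunc (y : R⟦X⟧) (n : ℕ) : R⟦X⟧ := ∏ k ∈ Icc 1 n, (1 - y ^ k)

def oddEulerTrunc (y : R⟦X⟧) (n : ℕ) : R⟦X⟧ := ∏ k ∈ Icc 1 n, (1 - y ^ (2 * k - 1))

theorem isUnit_eulerTrunc {y : R⟦X⟧} (hy : X ∣ y) (n : ℕ) : IsUnit (eulerTrunc y n) := by
  rw [X_dvd_iff] at hy
  have hconst : constantCoeff (eulerTrunc y n) = 1 := by
    simp only [eulerTrunc, map_prod, map_sub, map_one, map_pow, hy]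
    exact prod_eq_one fun k hk => by rw [zero_pow (by grind), sub_zero]
  exact isUnit_iff_constantCoeff.mpr (hconst ▸ isUnit_one)

theorem modXPow_eulerTrunc_of_le {N M : ℕ} {y : R⟦X⟧} (hy : X ∣ y) (hNM : N ≤ M) :
    modXPow R N (eulerTrunc y M) = modXPow R N (eulerTrunc y N) := by
  simp only [eulerTrunc, map_prod]
  refine (prod_subset (Icc_subset_Icc_right hNM) fun k hkM hkN => ?_).symm
  have hk : N < k := by simp only [mem_Icc, not_and, not_le] at hkM hkN; exact hkN hkM.1
  rw [map_sub, map_one, modXPow_pow_eq_zero_of_lt hy hk, sub_zero]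

theorem oddEulerTrunc_mul_eulerTrunc_sq (y : R⟦X⟧) (n : ℕ) :
    oddEulerTrunc y n * eulerTrunc (y ^ 2) n = eulerTrunc y (2 * n) := by
  induction n with
  | zero => simp [oddEulerTrunc, eulerTrunc]
  | succ n ih =>
    simp only [oddEulerTrunc, eulerTrunc] at ih ⊢
    rw [prod_Icc_succ_top (by omega : 1 ≤ n + 1), prod_Icc_succ_top (by omega : 1 ≤ n + 1),
      show 2 * (n + 1) = 2 * n + 1 + 1 by ring, prod_Icc_succ_top (by omega : 1 ≤ 2 * n + 1 + 1),
      prod_Icc_succ_top (by omega : 1 ≤ 2 * n + 1), ← ih,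
      show 2 * n + 1 + 1 - 1 = 2 * n + 1 by omega, ← pow_mul]
    ring

theorem modXPow_oddEulerTrunc_mul_eulerTrunc_sq {y : R⟦X⟧} (hy : X ∣ y) (N : ℕ) :
    modXPow R N (oddEulerTrunc y (N + 1)) * modXPow R N (eulerTrunc (y ^ 2) N) =
      modXPow R N (eulerTrunc y N) := by
  rw [← modXPow_eulerTrunc_of_le (dvd_pow hy two_ne_zero) N.le_succ,
    ← modXPow_eulerTrunc_of_le hy (by omega : N ≤ 2 * (N + 1)), ← map_mul,
    oddEulerTrunc_mul_eulerTrunc_sq]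

theorem coeff_prod_one_add_eq_sum_powersetCard {ι : Type*} (s : Finset ι) {f : ι → R⟦X⟧}
    (hf : ∀ i ∈ s, X ∣ f i) (N : ℕ) : coeff N (∏ i ∈ s, (1 + f i)) =
      ∑ t ∈ range (N + 1), coeff N (∑ T ∈ s.powersetCard t, ∏ i ∈ T, f i) := by
  set g : ℕ → R := fun t => coeff N (∑ T ∈ s.powersetCard t, ∏ i ∈ T, f i)
  have hg : ∀ t, min #s N < t → g t = 0 := by
    intro t ht
    rcases min_lt_iff.mp ht with hs | hN
    · simp [g, powersetCard_eq_empty.mpr hs]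
    · refine (map_sum _ _ _).trans (sum_eq_zero fun T hT => ?_)
      obtain ⟨hTs, rfl⟩ := mem_powersetCard.mp hT
      have hdvd : X ^ #T ∣ ∏ i ∈ T, f i := by
        simpa using prod_dvd_prod_of_dvd (fun _ => X) f fun i hi => hf i (hTs hi)
      exact X_pow_dvd_iff.mp hdvd N hN
  have hsum : ∀ m, min #s N ≤ m →
      ∑ t ∈ range (m + 1), g t = ∑ t ∈ range (min #s N + 1), g t :=
    fun m hm => (sum_subset (range_subset_range.mpr (by omega)) fun t _ ht =>
      hg t (by simp only [mem_range] at ht; omega)).symm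
  rw [prod_one_add, sum_powerset, map_sum]
  exact (hsum _ (min_le_left _ _)).trans (hsum _ (min_le_right _ _)).symm

end Truncation

section Field

variable {K : Type*} [Field K]

theorem one_sub_inv_mul_cancel {y : K⟦X⟧} (hy : X ∣ y) : (1 - y)⁻¹ * (1 - y) = 1 :=
  PowerSeries.inv_mul_cancel _ (by simp [X_dvd_iff.mp hy])

theorem one_add_div_one_sub_sq_mul {y : K⟦X⟧} (hy : X ∣ y) :
    (1 + y * ((1 - y)⁻¹) ^ 2) * ((1 - y) * (1 - y ^ 2) * (1 - y ^ 3)) = 1 - y ^ 6 := by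
  -- `(1 + y/(1-y)²)(1-y)² = 1 - y + y²` and `(1 - y + y²)(1 + y) = 1 + y³`
  linear_combination y * (1 + y) * (1 - y ^ 3) * ((1 - y)⁻¹ * (1 - y) + 1) *
    one_sub_inv_mul_cancel hy

def oddMacMahonProd (y : K⟦X⟧) (n : ℕ) : K⟦X⟧ :=
  ∏ s ∈ Icc 1 n, (1 + y ^ (2 * s - 1) * ((1 - y ^ (2 * s - 1))⁻¹) ^ 2)

def eulerQuotientProd (N : ℕ) : K⟦X⟧ :=
  ∏ k ∈ Icc 1 N, ((1 - X ^ (4 * k)) * (1 - X ^ (6 * k)) ^ 2 *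
    ((1 - X ^ k)⁻¹ * (1 - X ^ (3 * k))⁻¹ * (1 - X ^ (12 * k))⁻¹))

theorem oddMacMahonProd_mul_oddEulerTrunc {y : K⟦X⟧} (hy : X ∣ y) (n : ℕ) :
    oddMacMahonProd y n *
        (oddEulerTrunc y n * oddEulerTrunc (y ^ 2) n * oddEulerTrunc (y ^ 3) n) =
      oddEulerTrunc (y ^ 6) n := by
  simp only [oddMacMahonProd, oddEulerTrunc, ← prod_mul_distrib]
  refine prod_congr rfl fun s hs => ?_
  rw [pow_right_comm y 2, pow_right_comm y 3, pow_right_comm y 6]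
  exact one_add_div_one_sub_sq_mul (hy.trans (dvd_pow_self y (by grind)))

theorem eulerQuotientProd_mul_eulerTrunc (N : ℕ) :
    (eulerQuotientProd N : K⟦X⟧) *
        (eulerTrunc X N * eulerTrunc (X ^ 3) N * eulerTrunc (X ^ 12) N) =
      eulerTrunc (X ^ 4) N * eulerTrunc (X ^ 6) N ^ 2 := by
  simp only [eulerQuotientProd, eulerTrunc, ← pow_mul, ← prod_pow, ← prod_mul_distrib]
  refine prod_congr rfl fun k hk => ?_
  have hk1 : 1 ≤ k := (mem_Icc.mp hk).1
  have h1 := one_sub_inv_mul_cancel (dvd_pow_self (X : K⟦X⟧) (by omega : k ≠ 0))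
  have h3 := one_sub_inv_mul_cancel (dvd_pow_self (X : K⟦X⟧) (by omega : 3 * k ≠ 0))
  have h12 := one_sub_inv_mul_cancel (dvd_pow_self (X : K⟦X⟧) (by omega : 12 * k ≠ 0))
  linear_combination (1 - X ^ (4 * k) : K⟦X⟧) * (1 - X ^ (6 * k)) ^ 2 *
    ((1 - X ^ (3 * k))⁻¹ * (1 - X ^ (3 * k)) * (1 - X ^ (12 * k))⁻¹ * (1 - X ^ (12 * k)) *
      h1 + (1 - X ^ (12 * k))⁻¹ * (1 - X ^ (12 * k)) * h3 + h12)

theorem modXPow_oddMacMahonProd_eq_eulerQuotientProd (N : ℕ) :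
    modXPow K N (oddMacMahonProd X (N + 1)) = modXPow K N (eulerQuotientProd N) := by
  have hX : ∀ a ≠ 0, X ∣ (X : K⟦X⟧) ^ a := fun a ha => dvd_pow_self X ha
  have hL := congrArg (modXPow K N) (oddMacMahonProd_mul_oddEulerTrunc (dvd_refl X) (N + 1))
  have hR := congrArg (modXPow K N) (eulerQuotientProd_mul_eulerTrunc (K := K) N)
  have h1 := modXPow_oddEulerTrunc_mul_eulerTrunc_sq (dvd_refl (X : K⟦X⟧)) N
  have h2 : modXPow K N (oddEulerTrunc (X ^ 2) (N + 1)) * modXPow K N (eulerTrunc (X ^ 4) N) =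
      modXPow K N (eulerTrunc (X ^ 2) N) := by
    simpa [← pow_mul] using modXPow_oddEulerTrunc_mul_eulerTrunc_sq (hX 2 two_ne_zero) N
  have h3 : modXPow K N (oddEulerTrunc (X ^ 3) (N + 1)) * modXPow K N (eulerTrunc (X ^ 6) N) =
      modXPow K N (eulerTrunc (X ^ 3) N) := by
    simpa [← pow_mul] using modXPow_oddEulerTrunc_mul_eulerTrunc_sq (hX 3 three_ne_zero) N
  have h6 : modXPow K N (oddEulerTrunc (X ^ 6) (N + 1)) * modXPow K N (eulerTrunc (X ^ 12) N) =
      modXPow K N (eulerTrunc (X ^ 6) N) := by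
    simpa [← pow_mul] using modXPow_oddEulerTrunc_mul_eulerTrunc_sq (hX 6 (by norm_num)) N
  simp only [map_mul, map_pow] at hL hR
  set L := modXPow K N (oddMacMahonProd X (N + 1))
  set o₁ := modXPow K N (oddEulerTrunc X (N + 1))
  set o₂ := modXPow K N (oddEulerTrunc (X ^ 2) (N + 1))
  set e₁ := modXPow K N (eulerTrunc X N)
  set e₂ := modXPow K N (eulerTrunc (X ^ 2) N)
  set e₃ := modXPow K N (eulerTrunc (X ^ 3) N)
  set e₄ := modXPow K N (eulerTrunc (X ^ 4) N)
  set e₆ := modXPow K N (eulerTrunc (X ^ 6) N)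
  set e₁₂ := modXPow K N (eulerTrunc (X ^ 12) N)
  have hunit : ∀ {y : K⟦X⟧}, X ∣ y → IsUnit (modXPow K N (eulerTrunc y N)) :=
    fun hy => (isUnit_eulerTrunc hy N).map _
  refine ((((hunit dvd_rfl).mul (hunit (hX 2 two_ne_zero))).mul
    (hunit (hX 3 three_ne_zero))).mul (hunit (hX 12 (by norm_num)))).mul_right_cancel ?_
  -- after multiplying by `e₁ e₂ e₃ e₁₂`, both sides become `e₂ e₄ e₆²`
  linear_combination -L * e₁₂ * e₂ * e₃ * h1 - L * e₁₂ * o₁ * e₂ * e₃ * h2 -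
    L * e₁₂ * o₁ * e₂ * o₂ * e₄ * h3 + e₂ * e₄ * e₆ * e₁₂ * hL + e₂ * e₄ * e₆ * h6 -
    e₂ * hR

end Field

end PowerSeries

/-- `Σ_{t≥0} C_{2t} = ∏_{k≥1} (1-q^{4k})(1-q^{6k})²/((1-qᵏ)(1-q^{3k})(1-q^{12k}))`. -/
theorem sum_Cmac_eq :
    sumC = PowerSeries.mk fun N => coeff (R := ℚ) N (∏ k ∈ Finset.Icc 1 N,
      ((1 - X ^ (4 * k)) * (1 - X ^ (6 * k)) ^ 2 *
        ((1 - X ^ k : ℚ⟦X⟧)⁻¹ * (1 - X ^ (3 * k) : ℚ⟦X⟧)⁻¹ * (1 - X ^ (12 * k) : ℚ⟦X⟧)⁻¹))) := by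
  ext N
  simp only [sumC, Cmac, coeff_mk]
  rw [← coeff_prod_one_add_eq_sum_powersetCard _ fun s hs =>
    (dvd_pow_self X (by grind)).mul_right _]
  exact coeff_eq_of_modXPow_eq (modXPow_oddMacMahonProd_eq_eulerQuotientProd N)
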